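/- arXiv:1106.5218 — 2 statements merged into one kernel-verified Lean document; each statement's English description precedes it below -/
import Mathlib

section
/- Let p be a prime with p ≡ 1 (mod 6) and a ∈ F_p^*. Then ∑_{x ∈ F_p} (1 + χ(x³ + a³))·x = 0 in F_p, where χ is the quadratic character with χ(0)=0 viewed as taking values in F_p. In particular ∑_{x ∈ F_p} χ(x³ + a³)·x = 0 in F_p. -/
theorem stmt6 (p : ℕ) [Fact p.Prime] (hp : p % 6 = 1) (a : ZMod p) (ha : a ≠ 0) :
    (∑ x : ZMod p, (1 + ((quadraticChar (ZMod p) (x ^ 3 + a ^ 3) : ℤ) : ZMod p)) * x = 0)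
    ∧ (∑ x : ZMod p, ((quadraticChar (ZMod p) (x ^ 3 + a ^ 3) : ℤ) : ZMod p) * x = 0) := by
  have hcard : (3 : ℕ) ∣ Fintype.card (ZMod p)ˣ := by
    rw [ZMod.card_units_eq_totient, Nat.totient_prime Fact.out]
    omega
  haveI : Fact (Nat.Prime 3) := ⟨by norm_num⟩
  obtain ⟨g, hg⟩ := exists_prime_orderOf_dvd_card 3 hcard
  set ζ : ZMod p := (g : ZMod p) with hζdef
  have hζ3 : ζ ^ 3 = 1 := by
    have h := pow_orderOf_eq_one g
    rw [hg] at h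
    have := congrArg (Units.val) h
    simpa using this
  have hζ1 : ζ ≠ 1 := by
    intro h
    have : g = 1 := Units.ext h
    rw [this] at hg; simp at hg
  have hζ0 : ζ ≠ 0 := g.ne_zero
  have key : ∀ c : ZMod p → ZMod p, (∑ x : ZMod p, c (x ^ 3) * x) = 0 := by
    intro c
    have h1 : ∑ x : ZMod p, c ((ζ * x) ^ 3) * (ζ * x) = ∑ x : ZMod p, c (x ^ 3) * x :=
      Equiv.sum_comp (Equiv.mulLeft₀ ζ hζ0) (fun x => c (x ^ 3) * x)
    have h2 : ∀ x : ZMod p, c ((ζ * x) ^ 3) * (ζ * x) = ζ * (c (x ^ 3) * x) := by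
      intro x
      rw [mul_pow, hζ3, one_mul]; ring
    rw [Finset.sum_congr rfl (fun x _ => h2 x), ← Finset.mul_sum] at h1
    have h3 : (ζ - 1) * ∑ x : ZMod p, c (x ^ 3) * x = 0 := by
      rw [sub_mul, one_mul, h1, sub_self]
    rcases mul_eq_zero.mp h3 with h | h
    · exact absurd (sub_eq_zero.mp h) hζ1
    · exact h
  have hS : ∑ x : ZMod p, ((quadraticChar (ZMod p) (x ^ 3 + a ^ 3) : ℤ) : ZMod p) * x = 0 :=
    key (fun y => ((quadraticChar (ZMod p) (y + a ^ 3) : ℤ) : ZMod p))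
  have hU : ∑ x : ZMod p, x = 0 := by
    have := key (fun _ => 1)
    simpa using this
  refine ⟨?_, hS⟩
  calc ∑ x : ZMod p, (1 + ((quadraticChar (ZMod p) (x ^ 3 + a ^ 3) : ℤ) : ZMod p)) * x
      = (∑ x : ZMod p, x) +
        ∑ x : ZMod p, ((quadraticChar (ZMod p) (x ^ 3 + a ^ 3) : ℤ) : ZMod p) * x := by
        rw [← Finset.sum_add_distrib]
        exact Finset.sum_congr rfl (fun x _ => by ring)
    _ = 0 := by rw [hS, hU, add_zero]
end

section
/- Let p be a prime with p ≡ 1 (mod 6) and a ∈ F_p^*. Then N_{p,a} - (p+1) = χ(a)·(N_{p,1} - (p+1)), where N_{p,a} = 1 + #{(x,y) ∈ F_p² : y² = x³ + a³} and χ is the quadratic character. -/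
open Finset

lemma count_aux (p : ℕ) [Fact p.Prime] (hp2 : p ≠ 2) (c : ZMod p → ZMod p) :
    ((Finset.univ.filter
        (fun xy : ZMod p × ZMod p => xy.2 ^ 2 = c xy.1)).card : ℤ)
      = ∑ x : ZMod p, (1 + quadraticChar (ZMod p) (c x)) := by
  have hcard := Finset.card_eq_sum_card_fiberwise
    (f := Prod.fst) (s := Finset.univ.filter
        (fun xy : ZMod p × ZMod p => xy.2 ^ 2 = c xy.1)) (t := Finset.univ)
    (fun x _ => Finset.mem_univ _)
  rw [hcard]
  push_cast
  refine Finset.sum_congr rfl fun x _ => ?_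
  have hfib : ((Finset.univ.filter
        (fun xy : ZMod p × ZMod p => xy.2 ^ 2 = c xy.1)).filter
        (fun xy => xy.1 = x))
      = ({x} : Finset (ZMod p)) ×ˢ (Finset.univ.filter fun y : ZMod p => y ^ 2 = c x) := by
    ext ⟨u, v⟩
    simp only [Finset.mem_filter, Finset.mem_univ, true_and, Finset.mem_product,
      Finset.mem_singleton]
    constructor
    · rintro ⟨h1, rfl⟩; exact ⟨rfl, h1⟩
    · rintro ⟨rfl, h⟩; exact ⟨h, rfl⟩
  rw [hfib, Finset.card_product, Finset.card_singleton, one_mul]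
  have := quadraticChar_card_sqrts ((ZMod.ringChar_zmod_n p).substr hp2) (c x)
  rw [show {y : ZMod p | y ^ 2 = c x}.toFinset
      = Finset.univ.filter fun y : ZMod p => y ^ 2 = c x by
    ext y; simp] at this
  rw [this]; ring

theorem stmt10 (p : ℕ) [Fact p.Prime] (hp : p % 6 = 1) (a : ZMod p) (ha : a ≠ 0) :
    ((1 + (Finset.univ.filter
        (fun xy : ZMod p × ZMod p => xy.2 ^ 2 = xy.1 ^ 3 + a ^ 3)).card : ℤ) - (p + 1))
      = quadraticChar (ZMod p) a *
        ((1 + (Finset.univ.filter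
          (fun xy : ZMod p × ZMod p => xy.2 ^ 2 = xy.1 ^ 3 + 1)).card : ℤ) - (p + 1)) := by
  have hp2 : p ≠ 2 := by omega
  rw [count_aux p hp2 (fun x => x ^ 3 + a ^ 3), count_aux p hp2 (fun x => x ^ 3 + 1)]
  simp only [Finset.sum_add_distrib, Finset.sum_const, Finset.card_univ, ZMod.card,
    nsmul_eq_mul, mul_one]
  have key : (∑ x : ZMod p, (quadraticChar (ZMod p) (x ^ 3 + a ^ 3) : ℤ))
      = quadraticChar (ZMod p) a * ∑ x : ZMod p, (quadraticChar (ZMod p) (x ^ 3 + 1) : ℤ) := by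
    rw [Finset.mul_sum]
    refine (Fintype.sum_equiv (Equiv.mulLeft₀ a ha) _ _ fun x => ?_).symm
    have : (a * x) ^ 3 + a ^ 3 = a ^ 3 * (x ^ 3 + 1) := by ring
    simp only [Equiv.mulLeft₀_apply, this, map_mul, map_pow]
    have hsq : (quadraticChar (ZMod p) a : ℤ) ^ 2 = 1 := by
      exact_mod_cast congrArg (Int.cast : ℤ → ℤ)
        (quadraticChar_sq_one (F := ZMod p) ha)
    have h3 : (quadraticChar (ZMod p)) a ^ 3 = (quadraticChar (ZMod p)) a := by
      rw [pow_succ, hsq, one_mul]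
    rw [h3]
  rw [key]; ring
end
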